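/- arXiv:2403.13426 — 2 statements merged into one kernel-verified Lean document; each statement's English description precedes it below -/
import Mathlib

section
/- Let n = 3, let h satisfy hypotheses (H), and let k ≥ 1 be an integer. Then σ_(k)(g_h) < R λ_(k)/h(0)², where λ_(k) = k(k+1). -/
/-!
For `n = 3` the Rayleigh quotient is `(∫₀^R (a'² h² + λ a²)) / (a(0)² h(0)²)`, so the constant
function `1` would give exactly `R λ / h(0)²`, but it does not vanish at `R`. Replace it by the
ramp equal to `1` on `[0, R - ε]` and linear from `1` to `0` on `[R - ε, R]`. If
`|h r| ≤ C (R - r)` there, the numerator is at most `λ (R - ε) + (C² + λ) ε / 3`, which is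
strictly below `λ R` as soon as `C² < 2 λ`. Since `h(R) = 0` and `h'(R) = -1`, any `C > 1` works
for small `ε`; `C = 3/2` suffices because `λ_(k) = k (k + 1) ≥ 2`.
-/

open MeasureTheory Set

/-- Hypotheses (H): `h` is smooth on `[0,R]`, positive on `[0,R)`, `h(R)=0`,
`h'(R) = -1`, and all even-order derivatives of `h` vanish at `R`. -/
def SatisfiesH (R : ℝ) (h : ℝ → ℝ) : Prop :=
  ContDiffOn ℝ (⊤ : ℕ∞) h (Set.Icc 0 R) ∧
  (∀ r ∈ Set.Ico (0:ℝ) R, 0 < h r) ∧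
  h R = 0 ∧
  derivWithin h (Set.Icc 0 R) R = -1 ∧
  ∀ k : ℕ, iteratedDerivWithin (2 * k) h (Set.Icc 0 R) R = 0

/-- The `k`-th distinct eigenvalue `λ_(k) = k (n + k - 2)` of the Laplacian on the
round unit sphere `S^{n-1}`. -/
noncomputable def sphereEig (n k : ℕ) : ℝ := (k : ℝ) * ((n : ℝ) + (k : ℝ) - 2)

/-- The Rayleigh quotient
`R_λ(a; h) = (∫₀^R ((a')² h^{n-1} + λ a² h^{n-3}))/(a(0)² h(0)^{n-1})`. -/
noncomputable def rayleighQ (R : ℝ) (n : ℕ) (lam : ℝ) (h a : ℝ → ℝ) : ℝ :=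
  (∫ r in (0:ℝ)..R,
      (deriv a r) ^ 2 * h r ^ ((n : ℤ) - 1) + lam * (a r) ^ 2 * h r ^ ((n : ℤ) - 3)) /
    ((a 0) ^ 2 * h 0 ^ ((n : ℤ) - 1))

/-- Admissible test functions: Lipschitz on `[0,R]`, vanishing at `R`, nonzero at `0`. -/
def IsAdmissible (R : ℝ) (a : ℝ → ℝ) : Prop :=
  (∃ K : NNReal, LipschitzOnWith K a (Set.Icc 0 R)) ∧ a R = 0 ∧ a 0 ≠ 0

/-- The `k`-th distinct Steklov eigenvalue of the ball `[0,R] × S^{n-1}` with the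
revolution metric `g_h`, characterized variationally. -/
noncomputable def steklov (R : ℝ) (n k : ℕ) (h : ℝ → ℝ) : ℝ :=
  sInf { v : ℝ | ∃ a : ℝ → ℝ, IsAdmissible R a ∧ v = rayleighQ R n (sphereEig n k) h a }

/-- `a` is a minimizer realizing `σ_(k)(g_h)`. -/
def IsMinimizer (R : ℝ) (n k : ℕ) (h a : ℝ → ℝ) : Prop :=
  IsAdmissible R a ∧ rayleighQ R n (sphereEig n k) h a = steklov R n k h

open Filter Topology

theorem exists_abs_sub_le_mul_sub_of_hasDerivWithinAt_Iio {f : ℝ → ℝ} {f' C x : ℝ}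
    (hf : HasDerivWithinAt f f' (Iio x) x) (hC : |f'| < C) :
    ∃ l < x, ∀ r ∈ Ico l x, |f r - f x| ≤ C * (x - r) := by
  have hslope : ∀ᶠ r in 𝓝[<] x, |slope f x r| < C :=
    ((hasDerivWithinAt_iff_tendsto_slope' self_notMem_Iio).mp hf).abs.eventually (gt_mem_nhds hC)
  obtain ⟨l, hlx, hl⟩ := mem_nhdsLT_iff_exists_Ico_subset.mp hslope
  refine ⟨l, hlx, fun r hr => ?_⟩
  have hrx : r - x ≠ 0 := sub_ne_zero.2 hr.2.ne
  have hdiff : f r - f x = slope f x r * (r - x) := by rw [slope_def_field]; field_simp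
  rw [hdiff, abs_mul, abs_sub_comm, abs_of_pos (sub_pos.2 hr.2)]
  exact mul_le_mul_of_nonneg_right (hl hr).le (sub_pos.2 hr.2).le

noncomputable def ramp (R ε r : ℝ) : ℝ := min 1 ((R - r) / ε)

section ramp

variable {R ε r : ℝ}

theorem ramp_of_le (hε : 0 < ε) (hr : r ≤ R - ε) : ramp R ε r = 1 :=
  min_eq_left <| (one_le_div hε).2 (by linarith)

theorem ramp_of_ge (hε : 0 < ε) (hr : R - ε ≤ r) : ramp R ε r = (R - r) / ε :=
  min_eq_right <| (div_le_one hε).2 (by linarith)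

theorem lipschitzWith_ramp (hε : 0 < ε) : LipschitzWith (Real.toNNReal ε⁻¹) (ramp R ε) := by
  refine LipschitzWith.const_min (LipschitzWith.of_dist_le_mul fun x y => ?_) 1
  rw [Real.coe_toNNReal _ (inv_nonneg.2 hε.le), Real.dist_eq, Real.dist_eq, ← sub_div,
    sub_sub_sub_cancel_left, abs_div, abs_of_pos hε, abs_sub_comm, div_eq_inv_mul]

theorem isAdmissible_ramp (hε : 0 < ε) (hεR : ε ≤ R) : IsAdmissible R (ramp R ε) :=
  ⟨⟨_, (lipschitzWith_ramp hε).lipschitzOnWith⟩, by simp [ramp_of_ge hε (by linarith : R - ε ≤ R)],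
    by rw [ramp_of_le hε (by linarith)]; exact one_ne_zero⟩

theorem deriv_ramp_of_lt (hε : 0 < ε) (hr : r < R - ε) : deriv (ramp R ε) r = 0 := by
  have : ramp R ε =ᶠ[𝓝 r] fun _ => 1 :=
    eventually_of_mem (Iio_mem_nhds hr) fun x hx => ramp_of_le hε (le_of_lt hx)
  rw [this.deriv_eq, deriv_const]

theorem deriv_ramp_of_gt (hε : 0 < ε) (hr : R - ε < r) : deriv (ramp R ε) r = -ε⁻¹ := by
  have : ramp R ε =ᶠ[𝓝 r] fun x => (R - x) / ε :=
    eventually_of_mem (Ioi_mem_nhds hr) fun x hx => ramp_of_ge hε (le_of_lt hx)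
  rw [this.deriv_eq]
  simp [div_eq_mul_inv]

end ramp

theorem sphereEig_three (k : ℕ) : sphereEig 3 k = k * (k + 1) := by
  unfold sphereEig; push_cast; ring

theorem rayleighQ_three (R lam : ℝ) (h a : ℝ → ℝ) :
    rayleighQ R 3 lam h a =
      (∫ r in (0:ℝ)..R, deriv a r ^ 2 * h r ^ 2 + lam * a r ^ 2) / (a 0 ^ 2 * h 0 ^ 2) := by
  simp only [rayleighQ]
  norm_num

theorem rayleighQ_nonneg {R lam : ℝ} {n : ℕ} {h : ℝ → ℝ} (hR : 0 ≤ R)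
    (hh : ∀ r ∈ Icc 0 R, 0 ≤ h r) (hlam : 0 ≤ lam) (a : ℝ → ℝ) :
    0 ≤ rayleighQ R n lam h a := by
  refine div_nonneg (intervalIntegral.integral_nonneg hR fun r hr => ?_)
    (mul_nonneg (sq_nonneg _) (zpow_nonneg (hh 0 ⟨le_rfl, hR⟩) _))
  exact add_nonneg (mul_nonneg (sq_nonneg _) (zpow_nonneg (hh r hr) _))
    (mul_nonneg (mul_nonneg hlam (sq_nonneg _)) (zpow_nonneg (hh r hr) _))

theorem steklov_le_rayleighQ {R : ℝ} {n k : ℕ} {h a : ℝ → ℝ} (hR : 0 ≤ R)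
    (hh : ∀ r ∈ Icc 0 R, 0 ≤ h r) (hlam : 0 ≤ sphereEig n k) (ha : IsAdmissible R a) :
    steklov R n k h ≤ rayleighQ R n (sphereEig n k) h a :=
  csInf_le ⟨0, by rintro _ ⟨b, -, rfl⟩; exact rayleighQ_nonneg hR hh hlam b⟩ ⟨a, ha, rfl⟩

theorem integral_ramp_lt {R ε C lam : ℝ} {h : ℝ → ℝ} (hε : 0 < ε) (hεR : ε ≤ R)
    (hh : ContinuousOn h (Icc (R - ε) R)) (hdecay : ∀ r ∈ Ioo (R - ε) R, |h r| ≤ C * (R - r))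
    (hC : C ^ 2 < 2 * lam) :
    ∫ r in (0:ℝ)..R, deriv (ramp R ε) r ^ 2 * h r ^ 2 + lam * ramp R ε r ^ 2 < lam * R := by
  set F := fun r => deriv (ramp R ε) r ^ 2 * h r ^ 2 + lam * ramp R ε r ^ 2
  set G := fun r => ε⁻¹ ^ 2 * h r ^ 2 + lam * ((R - r) / ε) ^ 2
  have hF_flat : EqOn F (fun _ => lam) (Ioo 0 (R - ε)) := fun r hr => by
    simp [F, deriv_ramp_of_lt hε hr.2, ramp_of_le hε hr.2.le]
  have hF_slope : EqOn F G (Ioo (R - ε) R) := fun r hr => by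
    simp [F, G, deriv_ramp_of_gt hε hr.1, ramp_of_ge hε hr.1.le]
  have hG_int : IntervalIntegrable G volume (R - ε) R :=
    ContinuousOn.intervalIntegrable (by rw [uIcc_of_le (by linarith)]; fun_prop)
  have hG_le : ∀ r ∈ Ioo (R - ε) R, G r ≤ (C ^ 2 + lam) * ε⁻¹ ^ 2 * (R - r) ^ 2 := by
    intro r hr
    have : h r ^ 2 ≤ (C * (R - r)) ^ 2 :=
      sq_abs (h r) ▸ pow_le_pow_left₀ (abs_nonneg _) (hdecay r hr) 2
    simp only [G, div_eq_mul_inv]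
    nlinarith [sq_nonneg ε⁻¹]
  have hsq : ∫ r in (R - ε)..R, (R - r) ^ 2 = ε ^ 3 / 3 := by
    norm_num [intervalIntegral.integral_comp_sub_left (fun x => x ^ 2)]
  have hflat : ∫ r in (0:ℝ)..(R - ε), F r = lam * (R - ε) := by
    rw [intervalIntegral.integral_congr_Ioo_of_le (by linarith) hF_flat]
    simp [mul_comm]
  have hslope : ∫ r in (R - ε)..R, F r ≤ (C ^ 2 + lam) * ε / 3 :=
    calc ∫ r in (R - ε)..R, F r = ∫ r in (R - ε)..R, G r :=
          intervalIntegral.integral_congr_Ioo_of_le (by linarith) hF_slope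
      _ ≤ ∫ r in (R - ε)..R, (C ^ 2 + lam) * ε⁻¹ ^ 2 * (R - r) ^ 2 :=
          intervalIntegral.integral_mono_on_of_le_Ioo (by linarith) hG_int
            (by apply Continuous.intervalIntegrable; fun_prop) hG_le
      _ = (C ^ 2 + lam) * ε / 3 := by
          rw [intervalIntegral.integral_const_mul, hsq]; field_simp
  have hF_int₁ : IntervalIntegrable F volume 0 (R - ε) :=
    intervalIntegrable_const.congr_uIoo <| by
      rw [uIoo_of_le (by linarith)]; exact hF_flat.symm
  have hF_int₂ : IntervalIntegrable F volume (R - ε) R :=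
    hG_int.congr_uIoo <| by rw [uIoo_of_le (by linarith)]; exact hF_slope.symm
  rw [← intervalIntegral.integral_add_adjacent_intervals hF_int₁ hF_int₂, hflat]
  nlinarith

theorem rayleighQ_three_ramp_lt {R ε C lam : ℝ} {h : ℝ → ℝ} (hε : 0 < ε) (hεR : ε ≤ R)
    (hh : ContinuousOn h (Icc (R - ε) R)) (hdecay : ∀ r ∈ Ioo (R - ε) R, |h r| ≤ C * (R - r))
    (hC : C ^ 2 < 2 * lam) (h0 : h 0 ≠ 0) :
    rayleighQ R 3 lam h (ramp R ε) < R * lam / h 0 ^ 2 := by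
  rw [rayleighQ_three, ramp_of_le hε (by linarith), one_pow, one_mul, mul_comm R]
  exact div_lt_div_of_pos_right (integral_ramp_lt hε hεR hh hdecay hC) (by positivity)

theorem stmt_4 (R : ℝ) (hR : 0 < R) (h : ℝ → ℝ) (hH : SatisfiesH R h)
    (k : ℕ) (hk : 1 ≤ k) :
    steklov R 3 k h < R * sphereEig 3 k / (h 0) ^ 2 ∧
    sphereEig 3 k = (k : ℝ) * ((k : ℝ) + 1) := by
  obtain ⟨hsmooth, hpos, hhR, hderiv, -⟩ := hH
  have hlam : 2 ≤ sphereEig 3 k := by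
    have : (1:ℝ) ≤ k := by exact_mod_cast hk
    rw [sphereEig_three]; nlinarith
  have hnonneg : ∀ r ∈ Icc 0 R, 0 ≤ h r := fun r hr =>
    hr.2.eq_or_lt.elim (fun hr' => hr' ▸ hhR.ge) fun hr' => (hpos r ⟨hr.1, hr'⟩).le
  have hleft : HasDerivWithinAt h (-1) (Iio R) R :=
    (hderiv ▸ (hsmooth.differentiableOn (by simp) R ⟨hR.le, le_rfl⟩).hasDerivWithinAt)
      |>.mono_of_mem_nhdsWithin (Icc_mem_nhdsLT hR)
  obtain ⟨l, hlR, hl⟩ :=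
    exists_abs_sub_le_mul_sub_of_hasDerivWithinAt_Iio hleft (C := 3 / 2) (by norm_num)
  set ε := R - max l 0
  have hε : 0 < ε := sub_pos.2 (max_lt hlR hR)
  have hεR : ε ≤ R := by simp [ε]
  have hdecay : ∀ r ∈ Ioo (R - ε) R, |h r| ≤ 3 / 2 * (R - r) := fun r hr => by
    simpa [hhR] using hl r ⟨by linarith [hr.1, le_max_left l 0], hr.2⟩
  refine ⟨?_, sphereEig_three k⟩
  calc steklov R 3 k h ≤ rayleighQ R 3 (sphereEig 3 k) h (ramp R ε) :=
        steklov_le_rayleighQ hR.le hnonneg (by linarith) (isAdmissible_ramp hε hεR)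
    _ < R * sphereEig 3 k / h 0 ^ 2 :=
        rayleighQ_three_ramp_lt hε hεR
          (hsmooth.continuousOn.mono (Icc_subset_Icc (by linarith) le_rfl)) hdecay
          (by linarith) (hpos 0 ⟨le_rfl, hR⟩).ne'
end

section
/- Let n ≥ 3 be an integer, let h satisfy hypotheses (H), let k ≥ 1 be an integer, and let γ > 0. Suppose a_k is a minimizer for σ_(k)(g_h), and suppose that σ_(k+1)(g_h)/σ_(k)(g_h) ≥ λ_(k+1)/λ_(k) − γ. Then (∫₀^R (a_k'(r))² h(r)^{n−1} dr)/(a_k(0)² h(0)^{n−1}) ≤ γ σ_(k)(g_h) λ_(k)/(λ_(k+1) − λ_(k)). -/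
open MeasureTheory Set

/-- Auxiliary: integrability of `(deriv a)^2 * w` for `a` Lipschitz on `Icc 0 R`
and `w` continuous on `Icc 0 R`. -/
lemma aux_intervalIntegrable_deriv_sq_mul {R : ℝ} (hR : 0 < R) {a w : ℝ → ℝ}
    {K : NNReal} (hK : LipschitzOnWith K a (Set.Icc 0 R))
    (hw : ContinuousOn w (Set.Icc 0 R)) :
    IntervalIntegrable (fun r => (deriv a r) ^ 2 * w r) volume 0 R := by
  obtain ⟨C, hC⟩ := (isCompact_Icc (a := (0:ℝ)) (b := R)).exists_bound_of_continuousOn hw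
  have hderiv : ∀ r ∈ Ioo (0:ℝ) R, |deriv a r| ≤ K := by
    intro r hr
    by_cases hd : DifferentiableAt ℝ a r
    · have := hd.hasDerivAt.le_of_lipschitzOn (Icc_mem_nhds hr.1 hr.2) hK
      simpa [Real.norm_eq_abs] using this
    · rw [deriv_zero_of_not_differentiableAt hd]
      simpa using K.coe_nonneg
  rw [intervalIntegrable_iff_integrableOn_Ioc_of_le hR.le,
    integrableOn_Ioc_iff_integrableOn_Ioo]
  have hmeas : AEStronglyMeasurable (fun r => (deriv a r) ^ 2 * w r)
      (volume.restrict (Ioo 0 R)) := by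
    exact (((measurable_deriv a).pow_const 2).aestronglyMeasurable).mul
      ((hw.mono Ioo_subset_Icc_self).aestronglyMeasurable measurableSet_Ioo)
  refine Integrable.mono' (integrable_const ((K:ℝ)^2 * C)) hmeas ?_
  refine (ae_restrict_iff' measurableSet_Ioo).2 (Filter.Eventually.of_forall ?_)
  intro r hr
  have h1 := hderiv r hr
  have h2 := hC r (Ioo_subset_Icc_self hr)
  rw [Real.norm_eq_abs] at h2
  have h0 : (0:ℝ) ≤ |deriv a r| := abs_nonneg _
  have h0' : (0:ℝ) ≤ |w r| := abs_nonneg _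
  have hne : ‖(deriv a r) ^ 2 * w r‖ = |deriv a r| ^ 2 * |w r| := by
    rw [Real.norm_eq_abs, abs_mul, abs_pow]
  rw [hne]
  have hsq : |deriv a r| ^ 2 ≤ (K:ℝ)^2 := by nlinarith
  exact mul_le_mul hsq h2 h0' (by positivity)

lemma aux_alg (D P lam lam' g : ℝ)
    (h4' : (lam' - g * lam) * (D + lam * P) ≤ (D + lam' * P) * lam) :
    D * (lam' - lam) ≤ g * lam * (D + lam * P) := by nlinarith [h4']

theorem stmt_11 (n : ℕ) (hn : 3 ≤ n) (R : ℝ) (hR : 0 < R) (h : ℝ → ℝ)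
    (hH : SatisfiesH R h) (k : ℕ) (hk : 1 ≤ k) (γ : ℝ) (hγ : 0 < γ)
    (a : ℝ → ℝ) (ha : IsMinimizer R n k h a)
    (hratio : steklov R n (k + 1) h / steklov R n k h ≥
      sphereEig n (k + 1) / sphereEig n k - γ) :
    (∫ r in (0:ℝ)..R, (deriv a r) ^ 2 * h r ^ ((n : ℤ) - 1)) /
        ((a 0) ^ 2 * h 0 ^ ((n : ℤ) - 1)) ≤
      γ * steklov R n k h * sphereEig n k / (sphereEig n (k + 1) - sphereEig n k) := by
  obtain ⟨⟨⟨K, hK⟩, haR, ha0⟩, hmin⟩ := ha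
  obtain ⟨hsm, hpos, hhR, -, -⟩ := hH
  have hcont : ContinuousOn h (Icc 0 R) := hsm.continuousOn
  have hacont : ContinuousOn a (Icc 0 R) := hK.continuousOn
  have hh0 : 0 < h 0 := hpos 0 ⟨le_refl _, hR⟩
  have hhnn : ∀ r ∈ Icc (0:ℝ) R, 0 ≤ h r := by
    intro r hr
    rcases lt_or_eq_of_le hr.2 with hlt | heq
    · exact (hpos r ⟨hr.1, hlt⟩).le
    · rw [heq, hhR]
  -- eigenvalue facts
  have hnR : (3:ℝ) ≤ (n:ℝ) := by exact_mod_cast hn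
  have hkR : (1:ℝ) ≤ (k:ℝ) := by exact_mod_cast hk
  have hlam : 0 < sphereEig n k := by
    unfold sphereEig; nlinarith
  have hlam' : 0 < sphereEig n (k+1) := by
    unfold sphereEig; push_cast; nlinarith
  have hlt : sphereEig n k < sphereEig n (k+1) := by
    unfold sphereEig; push_cast; nlinarith
  have heignn : ∀ m : ℕ, 0 ≤ sphereEig n m := by
    intro m
    unfold sphereEig
    have hm : (0:ℝ) ≤ (m:ℝ) := Nat.cast_nonneg m
    nlinarith
  -- exponent casts and continuity of the weights
  have e1 : ((n:ℤ) - 1) = ((n-1 : ℕ) : ℤ) := by omega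
  have e3 : ((n:ℤ) - 3) = ((n-3 : ℕ) : ℤ) := by omega
  have hw1 : ContinuousOn (fun r => h r ^ ((n:ℤ)-1)) (Icc 0 R) := by
    simp only [e1, zpow_natCast]; exact hcont.pow _
  have hw3 : ContinuousOn (fun r => h r ^ ((n:ℤ)-3)) (Icc 0 R) := by
    simp only [e3, zpow_natCast]; exact hcont.pow _
  -- integrability
  have hI1 : IntervalIntegrable (fun r => (deriv a r)^2 * h r ^ ((n:ℤ)-1)) volume 0 R :=
    aux_intervalIntegrable_deriv_sq_mul hR hK hw1
  have hI2 : IntervalIntegrable (fun r => (a r)^2 * h r ^ ((n:ℤ)-3)) volume 0 R := by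
    apply ContinuousOn.intervalIntegrable
    rw [uIcc_of_le hR.le]
    exact (hacont.pow 2).mul hw3
  set D : ℝ := ∫ r in (0:ℝ)..R, (deriv a r) ^ 2 * h r ^ ((n : ℤ) - 1) with hDdef
  set P : ℝ := ∫ r in (0:ℝ)..R, (a r) ^ 2 * h r ^ ((n : ℤ) - 3) with hPdef
  set B : ℝ := (a 0) ^ 2 * h 0 ^ ((n : ℤ) - 1) with hBdef
  have hB : 0 < B := by
    apply mul_pos _ (zpow_pos hh0 _)
    exact pow_pos (abs_pos.mpr ha0) 2 |>.trans_le (by rw [sq_abs])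
  have hD0 : 0 ≤ D := by
    apply intervalIntegral.integral_nonneg hR.le
    intro r hr
    exact mul_nonneg (sq_nonneg _) (zpow_nonneg (hhnn r hr) _)
  have hP0 : 0 ≤ P := by
    apply intervalIntegral.integral_nonneg hR.le
    intro r hr
    exact mul_nonneg (sq_nonneg _) (zpow_nonneg (hhnn r hr) _)
  have hray : ∀ c : ℝ, rayleighQ R n c h a = (D + c * P) / B := by
    intro c
    unfold rayleighQ
    rw [hDdef, hPdef, hBdef]
    congr 1
    simp only [mul_assoc]
    rw [intervalIntegral.integral_add hI1 (hI2.const_mul c),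
      intervalIntegral.integral_const_mul]
  -- bounds for the variational sets
  have hbdd : ∀ m : ℕ, ∀ v ∈ { v : ℝ | ∃ b : ℝ → ℝ, IsAdmissible R b ∧
      v = rayleighQ R n (sphereEig n m) h b }, (0:ℝ) ≤ v := by
    rintro m v ⟨b, ⟨-, -, hb0⟩, rfl⟩
    unfold rayleighQ
    apply div_nonneg
    · apply intervalIntegral.integral_nonneg hR.le
      intro r hr
      have hhr := hhnn r hr
      exact add_nonneg (mul_nonneg (sq_nonneg _) (zpow_nonneg hhr _))
        (mul_nonneg (mul_nonneg (heignn m) (sq_nonneg _)) (zpow_nonneg hhr _))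
    · exact mul_nonneg (sq_nonneg _) (zpow_nonneg (hhnn 0 ⟨le_refl _, hR.le⟩) _)
  set σ : ℝ := steklov R n k h with hσdef
  set σ' : ℝ := steklov R n (k+1) h with hσ'def
  have hmem : ∀ m : ℕ, rayleighQ R n (sphereEig n m) h a ∈
      { v : ℝ | ∃ b : ℝ → ℝ, IsAdmissible R b ∧ v = rayleighQ R n (sphereEig n m) h b } :=
    fun m => ⟨a, ⟨⟨K, hK⟩, haR, ha0⟩, rfl⟩
  have hσ0 : 0 ≤ σ := by
    rw [hσdef]
    unfold steklov
    exact le_csInf ⟨_, hmem k⟩ (hbdd k)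
  have hσ'le : σ' ≤ (D + sphereEig n (k+1) * P) / B := by
    rw [← hray (sphereEig n (k+1)), hσ'def]
    unfold steklov
    exact csInf_le ⟨0, fun v hv => hbdd (k+1) v hv⟩ (hmem (k+1))
  have key : D + sphereEig n k * P = σ * B := by
    have hthis := hmin
    rw [hray (sphereEig n k)] at hthis
    rw [div_eq_iff hB.ne'] at hthis
    exact hthis
  rcases hσ0.eq_or_lt with hσz | hσp
  · -- σ = 0 : then D = 0
    have hDz : D = 0 := by nlinarith [mul_nonneg hlam.le hP0]
    rw [hDz, ← hσz]
    simp
  · -- σ > 0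
    have h1 : (sphereEig n (k+1) / sphereEig n k - γ) * σ ≤ σ' :=
      (le_div_iff₀ hσp).mp hratio
    have h3 : (sphereEig n (k+1) / sphereEig n k - γ) * σ * B ≤ D + sphereEig n (k+1) * P :=
      (le_div_iff₀ hB).mp (h1.trans hσ'le)
    have h6 : sphereEig n (k+1) / sphereEig n k * sphereEig n k = sphereEig n (k+1) :=
      div_mul_cancel₀ _ hlam.ne'
    have h4 : (sphereEig n (k+1) - γ * sphereEig n k) * (σ * B) ≤
        (D + sphereEig n (k+1) * P) * sphereEig n k := by
      have h5 := mul_le_mul_of_nonneg_right h3 hlam.le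
      have he : (sphereEig n (k+1) - γ * sphereEig n k) * (σ * B) =
          (sphereEig n (k+1) / sphereEig n k - γ) * σ * B * sphereEig n k := by
        field_simp
      rw [he]
      exact h5
    have h4' : (sphereEig n (k+1) - γ * sphereEig n k) * (D + sphereEig n k * P) ≤
        (D + sphereEig n (k+1) * P) * sphereEig n k := by rw [key]; exact h4
    rw [div_le_div_iff₀ hB (by linarith : (0:ℝ) < sphereEig n (k+1) - sphereEig n k)]
    have hgoal : D * (sphereEig n (k+1) - sphereEig n k) ≤
        γ * sphereEig n k * (D + sphereEig n k * P) :=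
      aux_alg D P (sphereEig n k) (sphereEig n (k+1)) γ h4'
    calc D * (sphereEig n (k+1) - sphereEig n k)
        ≤ γ * sphereEig n k * (D + sphereEig n k * P) := hgoal
      _ = γ * σ * sphereEig n k * B := by rw [key]; ring
end
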